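/- Fix integers r ≥ 1, n ≥ 2, k ≥ 1, and indices i ≠ j in {1,…,n}. Then there exists a polynomial γ in x_1,…,x_n with nonnegative rational coefficients such that, as polynomials, (-1)^r (∂G_{k,r}/∂x_i − ∂G_{k,r}/∂x_j) = (x_i − x_j) · γ. In particular, for all x ∈ [0,∞)^n one has (x_i − x_j) · (-1)^r (∂G_{k,r}/∂x_i(x) − ∂G_{k,r}/∂x_j(x)) ≥ 0, i.e. (-1)^r G_{k,r} satisfies the Schur–Ostrowski criterion for Schur convexity on [0,∞)^n. -/

import Mathlib

open scoped BigOperators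

/-- `exp F = Σ_{j≥0} F^j / j!` for a formal power series `F` (intended for `F` with zero
constant term; the defining sum is truncated at order `k` when extracting the `k`-th
coefficient, which agrees with `Σ_{j≥0} F^j / j!` whenever `F` has zero constant term). -/
noncomputable def expPS {R : Type*} [CommRing R] [Algebra ℚ R] (F : PowerSeries R) :
    PowerSeries R :=
  PowerSeries.mk fun k =>
    PowerSeries.coeff (R := R) k (∑ j ∈ Finset.range (k + 1), (Nat.factorial j : ℚ)⁻¹ • F ^ j)

/-- The generating function
`g_r(x,t) = (Π_i (1 + x_i t)) · exp(-Σ_i Q_r(x_i t) + Q_r^-(t Σ_i x_i))`,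
as a formal power series in `t` over `ℚ[x_1,…,x_n]`, where
`Q_r(s) = Σ_{m=1}^r (-1)^(m-1) s^m/m` and `Q_r^-(s) = Σ_{odd m ≤ r} s^m/m`. -/
noncomputable def gSeries (n r : ℕ) : PowerSeries (MvPolynomial (Fin n) ℚ) :=
  (∏ i, (1 + PowerSeries.C (R := MvPolynomial (Fin n) ℚ) (MvPolynomial.X i) * PowerSeries.X)) *
    expPS (PowerSeries.mk fun m =>
      if 1 ≤ m ∧ m ≤ r then
        (-((-1 : ℚ) ^ (m - 1) * (m : ℚ)⁻¹)) • ∑ i, MvPolynomial.X i ^ m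
          + (if Odd m then ((m : ℚ)⁻¹) • (∑ i, MvPolynomial.X i) ^ m else 0)
      else 0)

/-- `G_{k,r}` as a polynomial in `x_1,…,x_n` over `ℚ`: the coefficient of `t^k` in
`g_r(x,t)`. -/
noncomputable def Gpoly (n r k : ℕ) : MvPolynomial (Fin n) ℚ :=
  PowerSeries.coeff (R := _) k (gSeries n r)

/-- `G_{k,r}(x)` for a real vector `x`. -/
noncomputable def GReal {n : ℕ} (r k : ℕ) (x : Fin n → ℝ) : ℝ :=
  MvPolynomial.aeval x (Gpoly n r k)

/-!
Write `g = P · exp F` with `P = ∏ₗ (1 + xₗ t)`, and let `d` act on power series in `t` by applying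
`∂ᵢ - ∂ⱼ` to every coefficient. Since `d` kills `Σ xₗ`, only `-Σₗ Q_r(xₗ t)` contributes to `d F`,
and summing the resulting geometric series gives
`d g / g = (-1)^r t^(r+1) (xᵢ^r / (1 + xᵢ t) - xⱼ^r / (1 + xⱼ t))`.
The two denominators cancel against factors of `P`, leaving
`(-1)^r d g = (xᵢ - xⱼ) t^(r+1) (h_r + t xᵢ xⱼ h_(r-1)) ∏_{l ≠ i, j} (1 + xₗ t) exp F`
with `h_m = Σ_{a+b=m-1} xᵢ^a xⱼ^b`. All factors on the right have nonnegative coefficients; for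
`exp F` because the degree-`m` part of `F` is `p_m / m` for even `m` and `(p_1^m - p_m) / m` for
odd `m`. Then `γ` is the coefficient of `t^k`, and evaluating at `x ≥ 0` gives
`(xᵢ - xⱼ) (-1)^r (∂ᵢ G - ∂ⱼ G)(x) = (xᵢ - xⱼ)² γ(x) ≥ 0`.
-/

namespace MvPolynomial

variable (σ R : Type*) [CommSemiring R] [PartialOrder R] [IsOrderedRing R]

def nonnegCoeffs : Subsemiring (MvPolynomial σ R) where
  carrier := {p | ∀ m, 0 ≤ coeff m p}
  zero_mem' m := by simp
  one_mem' m := by classical rw [coeff_one]; split <;> simp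
  add_mem' hp hq m := by rw [coeff_add]; exact add_nonneg (hp m) (hq m)
  mul_mem' hp hq m := by
    classical
    rw [coeff_mul]; exact Finset.sum_nonneg fun _ _ => mul_nonneg (hp _) (hq _)

variable {σ R}

theorem X_mem_nonnegCoeffs (s : σ) : X s ∈ nonnegCoeffs σ R := fun m => by
  classical rw [coeff_X]; split <;> simp

theorem smul_mem_nonnegCoeffs {c : R} (hc : 0 ≤ c) {p : MvPolynomial σ R}
    (hp : p ∈ nonnegCoeffs σ R) : c • p ∈ nonnegCoeffs σ R := fun m => by
  rw [coeff_smul, smul_eq_mul]; exact mul_nonneg hc (hp m)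

theorem eval₂_nonneg_of_mem_nonnegCoeffs {S : Type*} [CommSemiring S] [PartialOrder S]
    [IsOrderedRing S] {f : R →+* S} (hf : ∀ c, 0 ≤ c → 0 ≤ f c) {p : MvPolynomial σ R}
    (hp : p ∈ nonnegCoeffs σ R) {x : σ → S} (hx : ∀ s, 0 ≤ x s) : 0 ≤ eval₂ f x p := by
  rw [eval₂_eq]
  exact Finset.sum_nonneg fun m _ =>
    mul_nonneg (hf _ (hp m)) (Finset.prod_nonneg fun s _ => pow_nonneg (hx s) _)

theorem sub_mul_aeval_sub_nonneg_of_smul_sub_eq {p q γ : MvPolynomial σ ℚ} {c : ℚ} {i j : σ}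
    (h : c • (p - q) = (X i - X j) * γ) (hγ : γ ∈ nonnegCoeffs σ ℚ) {x : σ → ℝ}
    (hx : ∀ l, 0 ≤ x l) :
    0 ≤ (x i - x j) * (c * (aeval x p - aeval x q)) := by
  have hγx : 0 ≤ aeval x γ :=
    eval₂_nonneg_of_mem_nonnegCoeffs (fun c hc => by rw [eq_ratCast]; exact_mod_cast hc) hγ hx
  have heval := congrArg (aeval x) h
  rw [map_smul, map_sub, map_mul, map_sub, aeval_X, aeval_X, Rat.smul_def] at heval
  rw [heval, ← mul_assoc]
  exact mul_nonneg (mul_self_nonneg _) hγx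

section

variable {σ R : Type*} [CommRing R]

noncomputable abbrev pderivSub (i j : σ) : Derivation R (MvPolynomial σ R) (MvPolynomial σ R) :=
  pderiv i - pderiv j

variable {i j : σ}

theorem pderivSub_X_left (hij : i ≠ j) : pderivSub i j (X i : MvPolynomial σ R) = 1 := by
  rw [Derivation.coe_sub, Pi.sub_apply, pderiv_X_self, pderiv_X_of_ne hij, sub_zero]

theorem pderivSub_X_right (hij : i ≠ j) : pderivSub i j (X j : MvPolynomial σ R) = -1 := by
  rw [Derivation.coe_sub, Pi.sub_apply, pderiv_X_self, pderiv_X_of_ne hij.symm, zero_sub]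

theorem pderivSub_X_of_ne {l : σ} (hli : l ≠ i) (hlj : l ≠ j) :
    pderivSub i j (X l : MvPolynomial σ R) = 0 := by
  rw [Derivation.coe_sub, Pi.sub_apply, pderiv_X_of_ne hli, pderiv_X_of_ne hlj, sub_zero]

variable [Fintype σ] (i j)

theorem pderivSub_sum_X : pderivSub i j (∑ l, X l : MvPolynomial σ R) = 0 := by
  classical simp [pderiv_X, Pi.single_apply]

theorem pderivSub_sum_X_pow (m : ℕ) :
    pderivSub i j (∑ l, X l ^ m : MvPolynomial σ R) = m • (X i ^ (m - 1) - X j ^ (m - 1)) := by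
  classical
  simp [Derivation.leibniz_pow, pderiv_X, Pi.single_apply, mul_sub, Finset.sum_sub_distrib]

end

end MvPolynomial

theorem Finset.exists_sum_pow_eq_sum_pow_add {ι S : Type*} [CommSemiring S] (T : Subsemiring S)
    (s : Finset ι) {a : ι → S} (ha : ∀ l ∈ s, a l ∈ T) {m : ℕ} (hm : 1 ≤ m) :
    ∃ q ∈ T, (∑ l ∈ s, a l) ^ m = ∑ l ∈ s, a l ^ m + q := by
  classical
  induction m, hm using Nat.le_induction with
  | base => exact ⟨0, T.zero_mem, by simp⟩
  | succ m _ ih =>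
    obtain ⟨q, hq, hpow⟩ := ih
    refine ⟨∑ l ∈ s, ∑ l' ∈ s.erase l, a l ^ m * a l' + q * ∑ l ∈ s, a l, ?_, ?_⟩
    · exact T.add_mem (T.sum_mem fun l hl => T.sum_mem fun l' hl' =>
        T.mul_mem (T.pow_mem (ha l hl) m) (ha l' (Finset.mem_of_mem_erase hl')))
        (T.mul_mem hq (T.sum_mem ha))
    · have hsplit (l) (hl : l ∈ s) :
          a l ^ m * ∑ l' ∈ s, a l' = a l ^ (m + 1) + ∑ l' ∈ s.erase l, a l ^ m * a l' := by
        rw [Finset.mul_sum, ← Finset.add_sum_erase _ _ hl, pow_succ]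
      rw [pow_succ, hpow, add_mul, Finset.sum_mul, Finset.sum_congr rfl hsplit,
        Finset.sum_add_distrib]
      ring

theorem pow_succ_mul_one_add_mul_sub {R : Type*} [CommRing R] (a b t : R) (s : ℕ) :
    a ^ (s + 1) * (1 + b * t) - b ^ (s + 1) * (1 + a * t)
      = (a - b) * (∑ m ∈ Finset.range (s + 1), a ^ m * b ^ (s - m)
          + t * a * b * ∑ m ∈ Finset.range s, a ^ m * b ^ (s - 1 - m)) := by
  have h₁ := geom_sum₂_mul a b (s + 1)
  have h₂ := geom_sum₂_mul a b s
  simp only [Nat.add_sub_cancel] at h₁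
  linear_combination -h₁ - t * a * b * h₂

namespace PowerSeries

variable {A : Type*} [CommRing A]

def coeffsIn (T : Subsemiring A) : Subsemiring A⟦X⟧ where
  carrier := {f | ∀ k, coeff k f ∈ T}
  zero_mem' k := by simp
  one_mem' k := by rw [coeff_one]; split <;> simp [T.one_mem, T.zero_mem]
  add_mem' hf hg k := by rw [map_add]; exact T.add_mem (hf k) (hg k)
  mul_mem' hf hg k := by
    rw [coeff_mul]; exact T.sum_mem fun _ _ => T.mul_mem (hf _) (hg _)

theorem C_mem_coeffsIn {T : Subsemiring A} {a : A} (ha : a ∈ T) : C a ∈ coeffsIn T := fun k => by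
  rw [coeff_C]; split
  · exact ha
  · exact T.zero_mem

theorem X_mem_coeffsIn (T : Subsemiring A) : X ∈ coeffsIn T := fun k => by
  rw [coeff_X]; split
  · exact T.one_mem
  · exact T.zero_mem

theorem expPS_mem_coeffsIn [Algebra ℚ A] {T : Subsemiring A}
    (hT : ∀ c : ℚ, 0 ≤ c → ∀ a ∈ T, c • a ∈ T) {F : A⟦X⟧} (hF : F ∈ coeffsIn T) :
    expPS F ∈ coeffsIn T := fun k => by
  rw [expPS, coeff_mk, map_sum]
  exact T.sum_mem fun j _ => by
    rw [coeff_smul]; exact hT _ (by positivity) _ (pow_mem hF j k)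

theorem coeff_pow_eq_zero_of_lt {F : A⟦X⟧} (hF : constantCoeff F = 0) {j k : ℕ} (hkj : k < j) :
    coeff k (F ^ j) = 0 := by
  obtain ⟨G, rfl⟩ := X_dvd_iff.2 hF
  rw [mul_pow, coeff_X_pow_mul', if_neg (by omega)]

theorem coeff_expPS_eq_of_lt [Algebra ℚ A] {F : A⟦X⟧} (hF : constantCoeff F = 0) {k N : ℕ}
    (hkN : k < N) :
    coeff k (expPS F) = coeff k (∑ j ∈ Finset.range N, (j.factorial : ℚ)⁻¹ • F ^ j) := by
  rw [expPS, coeff_mk, map_sum, map_sum]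
  refine Finset.sum_subset (Finset.range_subset_range.2 hkN) fun j _ hj => ?_
  rw [Finset.mem_range, not_lt] at hj
  rw [coeff_smul, coeff_pow_eq_zero_of_lt hF (by omega), smul_zero]

theorem coeff_mul_eq_of_coeff_eq {f g h : A⟦X⟧} (hf : constantCoeff f = 0) {k : ℕ}
    (hgh : ∀ b < k, coeff b g = coeff b h) : coeff k (f * g) = coeff k (f * h) := by
  rw [coeff_mul, coeff_mul]
  refine Finset.sum_congr rfl fun p hp => ?_
  rw [Finset.HasAntidiagonal.mem_antidiagonal] at hp
  rcases Nat.eq_zero_or_pos p.1 with hp₁ | hp₁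
  · rw [hp₁, coeff_zero_eq_constantCoeff_apply, hf, zero_mul, zero_mul]
  · rw [hgh p.2 (by omega)]

theorem coeff_geom_sum_C_mul_X (a : A) (r b : ℕ) :
    coeff b (∑ m ∈ Finset.range r, (C a * X) ^ m) = if b < r then a ^ b else 0 := by
  simp only [map_sum, mul_pow, ← map_pow, coeff_C_mul_X_pow, Finset.sum_ite_eq, Finset.mem_range]

theorem one_add_C_mul_X_mul_geom_sum (a : A) (N : ℕ) :
    (1 + C a * X) * ∑ m ∈ Finset.range N, (C (-a) * X) ^ m = 1 - (-1) ^ N * C a ^ N * X ^ N := by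
  rw [map_neg, neg_mul, ← sub_neg_eq_add 1 (C a * X), mul_neg_geom_sum, neg_pow, mul_pow,
    mul_assoc]

end PowerSeries

namespace Derivation

open PowerSeries

section

variable {R A : Type*} [CommSemiring R] [CommRing A] [Algebra R A]

noncomputable def mapPowerSeries (D : Derivation R A A) : Derivation R A⟦X⟧ A⟦X⟧ :=
  Derivation.mk'
    { toFun f := PowerSeries.mk fun k => D (coeff k f)
      map_add' f g := by ext k; simp
      map_smul' c f := by ext k; simp }
    fun f g => by
      ext k
      rw [smul_eq_mul, smul_eq_mul, mul_comm g, map_add]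
      simp only [LinearMap.coe_mk, AddHom.coe_mk, coeff_mk, coeff_mul, map_sum,
        ← Finset.sum_add_distrib]
      exact Finset.sum_congr rfl fun p _ => by rw [leibniz, smul_eq_mul, smul_eq_mul]; ring

variable (D : Derivation R A A)

@[simp]
theorem coeff_mapPowerSeries (f : A⟦X⟧) (k : ℕ) :
    coeff k (D.mapPowerSeries f) = D (coeff k f) := by
  simp [mapPowerSeries]

theorem mapPowerSeries_C (a : A) : D.mapPowerSeries (C a) = C (D a) := by
  ext k; rw [coeff_mapPowerSeries, coeff_C, coeff_C]; split <;> simp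

theorem mapPowerSeries_X : D.mapPowerSeries X = 0 := by
  ext k; rw [coeff_mapPowerSeries, coeff_X]; split <;> simp

theorem mapPowerSeries_one_add_C_mul_X (a : A) :
    D.mapPowerSeries (1 + C a * X) = C (D a) * X := by
  rw [map_add, map_one_eq_zero, zero_add, leibniz, mapPowerSeries_C, mapPowerSeries_X, smul_zero,
    zero_add, smul_eq_mul, mul_comm]

end

section

variable {A : Type*} [CommRing A] [Algebra ℚ A] (D : Derivation ℚ A A)

theorem mapPowerSeries_sum_range_succ_smul_pow (F : A⟦X⟧) (N : ℕ) :
    D.mapPowerSeries (∑ j ∈ Finset.range (N + 1), (j.factorial : ℚ)⁻¹ • F ^ j)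
      = D.mapPowerSeries F * ∑ j ∈ Finset.range N, (j.factorial : ℚ)⁻¹ • F ^ j := by
  rw [map_sum, Finset.sum_range_succ', Finset.mul_sum]
  simp only [map_smul, leibniz_pow, zero_smul, smul_zero, add_zero, Nat.add_sub_cancel]
  refine Finset.sum_congr rfl fun j _ => ?_
  rw [← Nat.cast_smul_eq_nsmul ℚ, smul_smul, smul_eq_mul, mul_smul_comm, mul_comm]
  congr 1
  rw [Nat.factorial_succ, Nat.cast_mul]
  field_simp
  ring

theorem mapPowerSeries_expPS {F : A⟦X⟧} (hF : constantCoeff F = 0) :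
    D.mapPowerSeries (expPS F) = D.mapPowerSeries F * expPS F := by
  ext k
  have hdF : constantCoeff (D.mapPowerSeries F) = 0 := by
    rw [← coeff_zero_eq_constantCoeff_apply, coeff_mapPowerSeries,
      coeff_zero_eq_constantCoeff_apply, hF, map_zero]
  rw [coeff_mapPowerSeries, coeff_expPS_eq_of_lt hF k.lt_succ_self, ← coeff_mapPowerSeries,
    mapPowerSeries_sum_range_succ_smul_pow]
  exact coeff_mul_eq_of_coeff_eq hdF fun b hb => (coeff_expPS_eq_of_lt hF hb).symm

end

end Derivation

open PowerSeries
open MvPolynomial (pderiv pderivSub nonnegCoeffs X_mem_nonnegCoeffs smul_mem_nonnegCoeffs)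

-- The exponent `-Σₗ Q_r(xₗ t) + Q_r^-(t Σₗ xₗ)` of `gSeries`.
noncomputable def expArg (n r : ℕ) : PowerSeries (MvPolynomial (Fin n) ℚ) :=
  PowerSeries.mk fun m =>
      if 1 ≤ m ∧ m ≤ r then
        (-((-1 : ℚ) ^ (m - 1) * (m : ℚ)⁻¹)) • ∑ i, MvPolynomial.X i ^ m
          + (if Odd m then ((m : ℚ)⁻¹) • (∑ i, MvPolynomial.X i) ^ m else 0)
      else 0

section

variable {n : ℕ}

theorem gSeries_eq_mul_expPS (r : ℕ) :
    gSeries n r = (∏ l, (1 + C (MvPolynomial.X l) * X)) * expPS (expArg n r) :=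
  rfl

theorem constantCoeff_expArg (r : ℕ) : constantCoeff (expArg n r) = 0 := by
  simp [expArg, ← coeff_zero_eq_constantCoeff_apply]

theorem expArg_mem_coeffsIn (r : ℕ) : expArg n r ∈ coeffsIn (nonnegCoeffs (Fin n) ℚ) := by
  intro m
  rw [expArg, coeff_mk]
  split_ifs with hm hodd
  · obtain ⟨q, hq, hpow⟩ := Finset.univ.exists_sum_pow_eq_sum_pow_add (nonnegCoeffs (Fin n) ℚ)
      (fun l _ => X_mem_nonnegCoeffs l) hm.1
    rw [(Nat.Odd.sub_odd hodd odd_one).neg_one_pow, hpow]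
    convert smul_mem_nonnegCoeffs (inv_nonneg.2 m.cast_nonneg) hq using 1
    module
  · rw [(Nat.Even.sub_odd hm.1 (Nat.not_odd_iff_even.1 hodd) odd_one).neg_one_pow, add_zero,
      neg_mul, one_mul, neg_neg]
    exact smul_mem_nonnegCoeffs (inv_nonneg.2 m.cast_nonneg)
      (Subsemiring.sum_mem _ fun l _ => pow_mem (X_mem_nonnegCoeffs l) m)
  · exact Subsemiring.zero_mem _

variable (i j : Fin n)

theorem mapPowerSeries_expArg (r : ℕ) :
    (pderivSub i j).mapPowerSeries (expArg n r)
      = -X * (∑ m ∈ Finset.range r, (C (-MvPolynomial.X i) * X) ^ m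
          - ∑ m ∈ Finset.range r, (C (-MvPolynomial.X j) * X) ^ m) := by
  refine PowerSeries.ext fun k => ?_
  rcases k with _ | b
  · simp [expArg]
  rw [neg_mul, map_neg, coeff_succ_X_mul, map_sub, coeff_geom_sum_C_mul_X, coeff_geom_sum_C_mul_X,
    Derivation.coeff_mapPowerSeries, expArg, coeff_mk]
  by_cases hb : b < r
  · rw [if_pos ⟨by omega, hb⟩, if_pos hb, if_pos hb]
    simp only [map_add, apply_ite (pderivSub i j), Derivation.map_smul, Derivation.leibniz_pow,
      MvPolynomial.pderivSub_sum_X, smul_zero, map_zero, ite_self, add_zero,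
      MvPolynomial.pderivSub_sum_X_pow, Nat.add_sub_cancel, ← Nat.cast_smul_eq_nsmul ℚ, smul_smul]
    have hc : -((-1 : ℚ) ^ b * ((b + 1 : ℕ) : ℚ)⁻¹) * (b + 1 : ℕ) = -(-1) ^ b := by
      field_simp
    rw [hc, neg_smul, Algebra.smul_def, map_pow, map_neg, map_one,
      neg_pow (MvPolynomial.X (R := ℚ) i), neg_pow (MvPolynomial.X (R := ℚ) j), mul_sub]
  · rw [if_neg (by omega), if_neg hb, if_neg hb, map_zero, sub_zero, neg_zero]

noncomputable def prodLinearFactorsExcept : PowerSeries (MvPolynomial (Fin n) ℚ) :=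
  ∏ l ∈ (Finset.univ.erase i).erase j, (1 + C (MvPolynomial.X l) * X)

theorem prod_eq_mul_mul_prodLinearFactorsExcept {i j : Fin n} (hij : i ≠ j) :
    ∏ l, (1 + C (MvPolynomial.X l) * X)
      = (1 + C (MvPolynomial.X i) * X) * (1 + C (MvPolynomial.X j) * X)
        * prodLinearFactorsExcept i j := by
  rw [mul_assoc, ← Finset.mul_prod_erase Finset.univ _ (Finset.mem_univ i),
    ← Finset.mul_prod_erase _ _ (Finset.mem_erase.2 ⟨hij.symm, Finset.mem_univ j⟩),
    prodLinearFactorsExcept]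

theorem mapPowerSeries_prodLinearFactorsExcept :
    (pderivSub i j).mapPowerSeries (prodLinearFactorsExcept i j) = 0 := by
  refine Finset.prod_induction _ (fun f => (pderivSub i j).mapPowerSeries f = 0)
    (fun f g hf hg => by rw [Derivation.leibniz, hf, hg, smul_zero, smul_zero, add_zero])
    (Derivation.map_one_eq_zero _) fun l hl => ?_
  simp only [Finset.mem_erase, Finset.mem_univ, and_true] at hl
  rw [Derivation.mapPowerSeries_one_add_C_mul_X, MvPolynomial.pderivSub_X_of_ne hl.2 hl.1,
    map_zero, zero_mul]

-- The cofactor of `xᵢ - xⱼ` in `(-1)^r d g` for `r = s + 1`.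
noncomputable def gammaSeries (s : ℕ) : PowerSeries (MvPolynomial (Fin n) ℚ) :=
  X ^ (s + 2)
    * (∑ m ∈ Finset.range (s + 1), C (MvPolynomial.X i) ^ m * C (MvPolynomial.X j) ^ (s - m)
      + X * C (MvPolynomial.X i) * C (MvPolynomial.X j)
        * ∑ m ∈ Finset.range s, C (MvPolynomial.X i) ^ m * C (MvPolynomial.X j) ^ (s - 1 - m))
    * prodLinearFactorsExcept i j * expPS (expArg n (s + 1))

theorem gammaSeries_mem_coeffsIn (s : ℕ) :
    gammaSeries i j s ∈ coeffsIn (nonnegCoeffs (Fin n) ℚ) := by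
  have hX := X_mem_coeffsIn (nonnegCoeffs (Fin n) ℚ)
  have hC (l : Fin n) : C (MvPolynomial.X l) ∈ coeffsIn (nonnegCoeffs (Fin n) ℚ) :=
    C_mem_coeffsIn (X_mem_nonnegCoeffs l)
  have hP : prodLinearFactorsExcept i j ∈ coeffsIn (nonnegCoeffs (Fin n) ℚ) :=
    prod_mem fun l _ => add_mem (one_mem _) (mul_mem (hC l) hX)
  have hE : expPS (expArg n (s + 1)) ∈ coeffsIn (nonnegCoeffs (Fin n) ℚ) :=
    expPS_mem_coeffsIn (fun c hc _ ha => smul_mem_nonnegCoeffs hc ha) (expArg_mem_coeffsIn _)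
  refine mul_mem (mul_mem (mul_mem (pow_mem hX _) (add_mem ?_ ?_)) hP) hE
  · exact sum_mem fun m _ => mul_mem (pow_mem (hC i) m) (pow_mem (hC j) _)
  · exact mul_mem (mul_mem (mul_mem hX (hC i)) (hC j))
      (sum_mem fun m _ => mul_mem (pow_mem (hC i) m) (pow_mem (hC j) _))

theorem smul_mapPowerSeries_gSeries_eq {i j : Fin n} (hij : i ≠ j) (s : ℕ) :
    ((-1 : ℚ) ^ (s + 1)) • (pderivSub (R := ℚ) i j).mapPowerSeries (gSeries n (s + 1))
      = C (MvPolynomial.X i - MvPolynomial.X j) * gammaSeries i j s := by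
  rw [gSeries_eq_mul_expPS, prod_eq_mul_mul_prodLinearFactorsExcept hij, gammaSeries,
    Algebra.smul_def, map_pow, map_neg, map_one, map_sub]
  set d := (pderivSub (R := ℚ) i j).mapPowerSeries
  set xi : PowerSeries (MvPolynomial (Fin n) ℚ) := C (MvPolynomial.X i)
  set xj : PowerSeries (MvPolynomial (Fin n) ℚ) := C (MvPolynomial.X j)
  set P := prodLinearFactorsExcept i j
  set E := expPS (expArg n (s + 1))
  set Si := ∑ m ∈ Finset.range (s + 1), (C (-MvPolynomial.X (R := ℚ) i) * X) ^ m
  set Sj := ∑ m ∈ Finset.range (s + 1), (C (-MvPolynomial.X (R := ℚ) j) * X) ^ m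
  have hdi : d (1 + xi * X) = X := by
    rw [Derivation.mapPowerSeries_one_add_C_mul_X, MvPolynomial.pderivSub_X_left hij, map_one,
      one_mul]
  have hdj : d (1 + xj * X) = -X := by
    rw [Derivation.mapPowerSeries_one_add_C_mul_X, MvPolynomial.pderivSub_X_right hij, map_neg,
      map_one, neg_one_mul]
  have hdP : d P = 0 := mapPowerSeries_prodLinearFactorsExcept i j
  have hdE : d E = d (expArg n (s + 1)) * E :=
    (pderivSub i j).mapPowerSeries_expPS (constantCoeff_expArg _)
  have hdF : d (expArg n (s + 1)) = -X * (Si - Sj) := mapPowerSeries_expArg i j (s + 1)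
  have hgi : (1 + xi * X) * Si = 1 - (-1) ^ (s + 1) * xi ^ (s + 1) * X ^ (s + 1) :=
    one_add_C_mul_X_mul_geom_sum _ _
  have hgj : (1 + xj * X) * Sj = 1 - (-1) ^ (s + 1) * xj ^ (s + 1) * X ^ (s + 1) :=
    one_add_C_mul_X_mul_geom_sum _ _
  have hsign : ((-1) ^ (s + 1) : PowerSeries (MvPolynomial (Fin n) ℚ)) * (-1) ^ (s + 1) = 1 := by
    rw [← mul_pow, neg_one_mul, neg_neg, one_pow]
  have hpoly := pow_succ_mul_one_add_mul_sub xi xj X s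
  simp only [Derivation.leibniz, smul_eq_mul, hdP, hdi, hdj, hdE, hdF]
  linear_combination (-1) ^ (s + 1) * X * P * E * ((1 + xi * X) * hgj - (1 + xj * X) * hgi)
    + X ^ (s + 2) * P * E * hpoly
    + X ^ (s + 2) * P * E * (xi ^ (s + 1) * (1 + xj * X) - xj ^ (s + 1) * (1 + xi * X)) * hsign

end

theorem stmt_9_general (r n k : ℕ) (hr : 1 ≤ r)
    (i j : Fin n) (hij : i ≠ j) :
    ∃ γ : MvPolynomial (Fin n) ℚ,
      (∀ m : (Fin n) →₀ ℕ, 0 ≤ MvPolynomial.coeff m γ) ∧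
      ((-1 : ℚ) ^ r) •
          (MvPolynomial.pderiv i (Gpoly n r k) - MvPolynomial.pderiv j (Gpoly n r k))
        = (MvPolynomial.X i - MvPolynomial.X j) * γ ∧
      ∀ x : Fin n → ℝ, (∀ l, 0 ≤ x l) →
        0 ≤ (x i - x j) *
          ((-1 : ℝ) ^ r *
            (MvPolynomial.aeval x (MvPolynomial.pderiv i (Gpoly n r k)) -
              MvPolynomial.aeval x (MvPolynomial.pderiv j (Gpoly n r k)))) := by
  obtain ⟨s, rfl⟩ : ∃ s, r = s + 1 := ⟨r - 1, by omega⟩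
  have hγ : ((-1 : ℚ) ^ (s + 1)) • (pderiv i (Gpoly n (s + 1) k) - pderiv j (Gpoly n (s + 1) k))
      = (MvPolynomial.X i - MvPolynomial.X j) * coeff k (gammaSeries i j s) := by
    rw [← coeff_C_mul, ← smul_mapPowerSeries_gSeries_eq hij, coeff_smul,
      Derivation.coeff_mapPowerSeries]
    rfl
  refine ⟨_, gammaSeries_mem_coeffsIn i j s k, hγ, fun x hx => ?_⟩
  exact_mod_cast MvPolynomial.sub_mul_aeval_sub_nonneg_of_smul_sub_eq hγ
    (gammaSeries_mem_coeffsIn i j s k) hx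

theorem stmt_9 (r n k : ℕ) (hr : 1 ≤ r) (hn : 2 ≤ n) (hk : 1 ≤ k)
    (i j : Fin n) (hij : i ≠ j) :
    ∃ γ : MvPolynomial (Fin n) ℚ,
      (∀ m : (Fin n) →₀ ℕ, 0 ≤ MvPolynomial.coeff m γ) ∧
      ((-1 : ℚ) ^ r) •
          (MvPolynomial.pderiv i (Gpoly n r k) - MvPolynomial.pderiv j (Gpoly n r k))
        = (MvPolynomial.X i - MvPolynomial.X j) * γ ∧
      ∀ x : Fin n → ℝ, (∀ l, 0 ≤ x l) →
        0 ≤ (x i - x j) *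
          ((-1 : ℝ) ^ r *
            (MvPolynomial.aeval x (MvPolynomial.pderiv i (Gpoly n r k)) -
              MvPolynomial.aeval x (MvPolynomial.pderiv j (Gpoly n r k)))) :=
  stmt_9_general r n k hr i j hij
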